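/- arXiv:1803.03238 — 3 statements merged into one kernel-verified Lean document; each statement's English description precedes it below -/
import Mathlib

section
/- If X_1, ..., X_m are independent random variables, each geometrically distributed on {1,2,3,...} with success probability 1/k (hence mean k), and X = X_1 + ... + X_m, then for any λ > 0, Pr[X ≤ m(k - λ)] ≤ exp(-mλ²/(2k²)). -/
/-!
Chernoff's bound at `t = λ / k²`. The law of `X i - 1` is Mathlib's `geometricMeasure (1 / k)`,
so `E[exp (-t X i)] = exp (-t) / (k - (k - 1) exp (-t))`, which is at most
`exp (-k t + k² t² / 2)` for every `t ≥ 0`: after clearing denominators, the ratio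
`(k eᵗ - (k - 1)) exp (-k t + k² t² / 2)` equals `1` at `t = 0` and is nondecreasing.
-/

open MeasureTheory ProbabilityTheory Real Set

lemma one_le_mul_exp_add_sq {k t : ℝ} (hk : 1 ≤ k) (ht : 0 ≤ t) :
    1 ≤ (k * exp t - (k - 1)) * exp (-(k * t) + k ^ 2 * t ^ 2 / 2) := by
  let g : ℝ → ℝ := fun t => (k * exp t - (k - 1)) * exp (-(k * t) + k ^ 2 * t ^ 2 / 2)
  let g' : ℝ → ℝ := fun t =>
    (k * exp t + (k * exp t - (k - 1)) * (k ^ 2 * t - k)) * exp (-(k * t) + k ^ 2 * t ^ 2 / 2)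
  have hderiv : ∀ t, HasDerivAt g (g' t) t := by
    intro t
    have h1 : HasDerivAt (fun t => k * exp t - (k - 1)) (k * exp t) t :=
      ((hasDerivAt_exp t).const_mul k).sub_const _
    have h2 : HasDerivAt (fun t => -(k * t) + k ^ 2 * t ^ 2 / 2) (k ^ 2 * t - k) t :=
      (((hasDerivAt_id t).const_mul k).neg.add
        (((hasDerivAt_pow 2 t).const_mul (k ^ 2)).div_const 2)).congr_deriv (by push_cast; ring)
    exact (h1.mul h2.exp).congr_deriv (by ring)
  have hmono : MonotoneOn g (Ici 0) := by
    refine monotoneOn_of_hasDerivWithinAt_nonneg (convex_Ici 0)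
      (fun t _ => (hderiv t).continuousAt.continuousWithinAt)
      (fun t _ => (hderiv t).hasDerivWithinAt) fun t ht => ?_
    rw [interior_Ici, mem_Ioi] at ht
    -- `t eᵗ ≥ eᵗ - 1` and `k eᵗ - (k - 1) ≥ eᵗ` make the bracket nonnegative
    have hu : 1 ≤ exp t := one_le_exp ht.le
    have htu : exp t - 1 ≤ t * exp t := by
      have := add_one_le_exp (-t)
      have := mul_le_mul_of_nonneg_left this (exp_pos t).le
      rw [← exp_add, add_neg_cancel, exp_zero] at this
      nlinarith
    have hbr : 0 ≤ k * exp t + (k * exp t - (k - 1)) * (k ^ 2 * t - k) := by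
      nlinarith [mul_nonneg (sub_nonneg.2 hk) (sub_nonneg.2 hu),
        mul_nonneg (mul_nonneg (sub_nonneg.2 hk) (by linarith : (0:ℝ) ≤ k)) (sub_nonneg.2 htu),
        mul_nonneg (mul_nonneg (sq_nonneg k) ht.le)
          (mul_nonneg (sub_nonneg.2 hk) (sub_nonneg.2 hu))]
    exact mul_nonneg hbr (exp_pos _).le
  simpa [g] using hmono self_mem_Ici (mem_Ici.2 ht) ht

lemma mul_exp_neg_div_le_exp {k t : ℝ} (hk : 1 ≤ k) (ht : 0 ≤ t) :
    1 / k * exp (-t) / (1 - (1 - 1 / k) * exp (-t)) ≤ exp (-(k * t) + k ^ 2 * t ^ 2 / 2) := by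
  have hk0 : 0 < k := by linarith
  have hden : 1 - (1 - 1 / k) * exp (-t) = (k * exp t - (k - 1)) * exp (-t) / k := by
    rw [exp_neg]; field_simp
  have hpos : 0 < k * exp t - (k - 1) := by nlinarith [one_le_exp ht]
  rw [hden, div_le_iff₀ (by positivity)]
  calc 1 / k * exp (-t) = 1 / k * exp (-t) * 1 := (mul_one _).symm
    _ ≤ 1 / k * exp (-t) * ((k * exp t - (k - 1)) * exp (-(k * t) + k ^ 2 * t ^ 2 / 2)) := by
        gcongr; exact one_le_mul_exp_add_sq hk ht
    _ = _ := by ring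

theorem MeasureTheory.Measure.ext_of_univ_of_singleton_succ {ν ν' : Measure ℕ}
    [IsFiniteMeasure ν] (huniv : ν univ = ν' univ) (hsucc : ∀ n, ν {n + 1} = ν' {n + 1}) :
    ν = ν' := by
  have hsplit : ∀ ρ : Measure ℕ, ρ univ = ρ {0} + ∑' n, ρ {n + 1} := fun ρ => by
    rw [← Measure.tsum_indicator_apply_singleton ρ univ MeasurableSet.univ, indicator_univ]
    exact tsum_eq_zero_add' ENNReal.summable
  have htail : ∑' n, ν {n + 1} ≠ ⊤ :=
    ne_top_of_le_ne_top (measure_ne_top ν univ) ((le_add_self).trans (hsplit ν).ge)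
  refine Measure.ext_of_singleton fun n => ?_
  cases n with
  | zero =>
    rw [hsplit ν, hsplit ν', tsum_congr hsucc] at huniv
    exact (ENNReal.add_left_inj (by rwa [← tsum_congr hsucc])).1 huniv
  | succ n => exact hsucc n

section

variable {Ω : Type*} [MeasurableSpace Ω] {μ : Measure Ω} {p : unitInterval}

lemma map_eq_map_succ_geometricMeasure [IsProbabilityMeasure μ] {Y : Ω → ℕ}
    (hY : Measurable Y) (hp : p ≠ 0)
    (h : ∀ n, μ {ω | Y ω = n + 1} = ENNReal.ofReal ((1 - p) ^ n * p)) :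
    μ.map Y = (geometricMeasure p).map Nat.succ := by
  refine Measure.ext_of_univ_of_singleton_succ ?_ fun n => ?_
  · simp [Measure.map_apply hY, Measure.map_apply measurable_from_top]
  · rw [Measure.map_apply hY (measurableSet_singleton _),
      Measure.map_apply measurable_from_top (measurableSet_singleton _),
      show Nat.succ ⁻¹' {n + 1} = {n} by ext; simp, geometricMeasure_singleton hp]
    exact h n

lemma mgf_natCast_of_map_eq_map_succ_geometricMeasure {Y : Ω → ℕ} (hY : Measurable Y)
    (hlaw : μ.map Y = (geometricMeasure p).map Nat.succ) (hp : p ≠ 0) {s : ℝ}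
    (hs : (1 - p) * exp s < 1) :
    mgf (fun ω => (Y ω : ℝ)) μ s = p * exp s / (1 - (1 - p) * exp s) := by
  have hq : 0 ≤ (1 - p : ℝ) * exp s := mul_nonneg (sub_nonneg.2 p.2.2) (exp_pos s).le
  calc mgf (fun ω => (Y ω : ℝ)) μ s = ∫ n : ℕ, exp (s * n) ∂μ.map Y :=
        (integral_map (f := fun n : ℕ => exp (s * n)) hY.aemeasurable
          measurable_from_top.aestronglyMeasurable).symm
    _ = ∫ n, exp (s * (n + 1 : ℕ)) ∂geometricMeasure p := by
        rw [hlaw, integral_map measurable_from_top.aemeasurable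
          measurable_from_top.aestronglyMeasurable]
    _ = ∑' n : ℕ, ((1 - p : ℝ) ^ n * p) • exp (s * (n + 1 : ℕ)) :=
        integral_geometricMeasure hp _
    _ = ∑' n : ℕ, ((1 - p) * exp s) ^ n * (p * exp s) := by
        congr 1 with n
        rw [smul_eq_mul, mul_pow, ← exp_nat_mul, Nat.cast_succ, mul_comm s, add_one_mul,
          exp_add]
        ring
    _ = p * exp s / (1 - (1 - p) * exp s) := by
        rw [tsum_mul_right, tsum_geometric_of_lt_one hq hs, inv_mul_eq_div]

lemma integrable_exp_neg_mul_of_nonneg [IsFiniteMeasure μ] {f : Ω → ℝ} (hf : Measurable f)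
    (hf0 : ∀ ω, 0 ≤ f ω) {t : ℝ} (ht : 0 ≤ t) :
    Integrable (fun ω => exp (-t * f ω)) μ :=
  Integrable.of_bound (by fun_prop) 1 <| ae_of_all _ fun ω => by
    rw [norm_of_nonneg (exp_pos _).le, exp_le_one_iff]
    nlinarith [hf0 ω]

theorem measure_sum_le_le_exp_of_mgf_le {ι : Type*} [Fintype ι] {X : ι → Ω → ℝ}
    (hmeas : ∀ i, Measurable (X i)) (hindep : iIndepFun X μ) {a v lam : ℝ} (hv : 0 < v)
    (hlam : 0 ≤ lam) (hint : ∀ i, ∀ t ≥ 0, Integrable (fun ω => exp (-t * X i ω)) μ)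
    (hmgf : ∀ i, ∀ t ≥ 0, mgf (X i) μ (-t) ≤ exp (-(a * t) + v * t ^ 2 / 2)) :
    μ.real {ω | ∑ i, X i ω ≤ Fintype.card ι * (a - lam)} ≤
      exp (-(Fintype.card ι) * lam ^ 2 / (2 * v)) := by
  have := hindep.isProbabilityMeasure
  set n := Fintype.card ι
  -- the optimal Chernoff parameter
  set t := lam / v with ht_def
  have ht : 0 ≤ t := div_nonneg hlam hv.le
  have hchernoff := measure_le_le_exp_mul_mgf (X := ∑ i, X i) (n * (a - lam))
    (neg_nonpos.2 ht) (hindep.integrable_exp_mul_sum hmeas fun i _ => hint i t ht)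
  rw [hindep.mgf_sum hmeas] at hchernoff
  calc μ.real {ω | ∑ i, X i ω ≤ n * (a - lam)}
      = μ.real {ω | (∑ i, X i) ω ≤ n * (a - lam)} := by simp only [Finset.sum_apply]
    _ ≤ exp (-(-t) * (n * (a - lam))) * ∏ i, mgf (X i) μ (-t) := hchernoff
    _ ≤ exp (-(-t) * (n * (a - lam))) * ∏ _i : ι, exp (-(a * t) + v * t ^ 2 / 2) := by
        gcongr with i
        · exact fun _ _ => mgf_nonneg
        · exact hmgf i t ht
    _ = exp (-n * lam ^ 2 / (2 * v)) := by
        rw [Finset.prod_const, Finset.card_univ, ← exp_nat_mul, ← exp_add, ht_def]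
        congr 1
        field_simp
        ring

end

/-- If `X 1, ..., X m` are independent geometric random variables on `{1,2,...}` with
success probability `1/k` (hence mean `k`), and `X = X 1 + ... + X m`, then for `λ > 0`,
`Pr[X ≤ m(k - λ)] ≤ exp(-mλ²/(2k²))`. -/
theorem geometric_sum_lower_tail
    {Ω : Type*} [MeasurableSpace Ω] (μ : Measure Ω) [IsProbabilityMeasure μ]
    (m : ℕ) (k : ℝ) (hk : 1 ≤ k)
    (X : Fin m → Ω → ℕ)
    (hmeas : ∀ i, Measurable (X i))
    (hindep : iIndepFun X μ)
    (hgeom : ∀ i, ∀ j : ℕ, 1 ≤ j →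
      μ {ω | X i ω = j} = ENNReal.ofReal ((1 - 1 / k) ^ (j - 1) * (1 / k)))
    (lam : ℝ) (hlam : 0 < lam) :
    μ {ω | (∑ i, (X i ω : ℝ)) ≤ m * (k - lam)} ≤
      ENNReal.ofReal (Real.exp (-(m : ℝ) * lam ^ 2 / (2 * k ^ 2))) := by
  have hk0 : 0 < k := by linarith
  let p : unitInterval := ⟨1 / k, by positivity, (div_le_one hk0).2 hk⟩
  have hp : p ≠ 0 := fun h => by simpa [p, hk0.ne'] using congrArg Subtype.val h
  have hlaw : ∀ i, μ.map (X i) = (geometricMeasure p).map Nat.succ := fun i =>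
    map_eq_map_succ_geometricMeasure (hmeas i) hp fun n => by
      simpa [p] using hgeom i (n + 1) (by omega)
  have hmeasR : ∀ i, Measurable fun ω => (X i ω : ℝ) := fun i =>
    measurable_from_top.comp (hmeas i)
  have hmgf : ∀ i, ∀ t ≥ 0,
      mgf (fun ω => (X i ω : ℝ)) μ (-t) ≤ exp (-(k * t) + k ^ 2 * t ^ 2 / 2) := by
    intro i t ht
    have hs : (1 - p) * exp (-t) < 1 :=
      calc (1 - p) * exp (-t) ≤ 1 - p :=
            mul_le_of_le_one_right (sub_nonneg.2 p.2.2) (exp_le_one_iff.2 (by linarith))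
        _ < 1 := by simp [p, hk0]
    rw [mgf_natCast_of_map_eq_map_succ_geometricMeasure (hmeas i) (hlaw i) hp hs]
    exact mul_exp_neg_div_le_exp hk ht
  have htail := measure_sum_le_le_exp_of_mgf_le hmeasR
    (hindep.comp (fun _ n => (n : ℝ)) fun _ => measurable_from_top) (by positivity) hlam.le
    (fun i t ht => integrable_exp_neg_mul_of_nonneg (hmeasR i) (fun _ => Nat.cast_nonneg _) ht)
    hmgf
  rw [Fintype.card_fin] at htail
  rw [← ofReal_measureReal]
  exact ENNReal.ofReal_le_ofReal htail
end

section
/- If A is a uniformly random word of length m over an alphabet of size k and B is an independent uniformly random word of length b over the same alphabet, then Pr[A is a subsequence of B] ≤ exp((b - (7/8)·k·m)/(4k)). -/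
/-!
Let `N(m, b)` be the number of pairs `(A, B)` of words of lengths `m` and `b` over an alphabet
of size `k` with `A` a subsequence of `B`. Splitting off the first letters `a` of `A` and `c` of
`B`: when `c = a` the first letters may be matched, and otherwise `c` is useless, so
`N(m+1, b+1) = k N(m, b) + (k - 1) N(m+1, b)`.
The bound `N(m, b) ≤ k^(m+b) exp(b/(4k) - 7m/32)` then follows by induction, the inductive step
reducing to `exp(7/32) + (k - 1) ≤ k exp(1/(4k))`, which holds because `exp(7/32) ≤ 5/4`.
-/

open Classical

/-- Probability of an event under the uniform distribution on a finite type. -/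
noncomputable def unifPr {α : Type*} [Fintype α] (P : α → Prop) : ℝ :=
  ((Finset.univ.filter P).card : ℝ) / (Fintype.card α : ℝ)

open Finset Real

theorem Real.exp_seven_div_thirtytwo_le_five_div_four : exp (7 / 32) ≤ 5 / 4 := by
  have h := exp_bound' (x := 7 / 32) (by norm_num) (by norm_num) (n := 3) (by norm_num)
  norm_num [Finset.sum_range_succ, Nat.factorial] at h
  linarith

theorem Real.exp_seven_div_thirtytwo_add_sub_one_le {x : ℝ} (hx : 0 < x) :
    exp (7 / 32) + (x - 1) ≤ x * exp (1 / (4 * x)) :=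
  calc exp (7 / 32) + (x - 1) ≤ x * (1 / (4 * x) + 1) := by
        have : x * (1 / (4 * x) + 1) = x + 1 / 4 := by field_simp; ring
        linarith [exp_seven_div_thirtytwo_le_five_div_four]
    _ ≤ x * exp (1 / (4 * x)) := by gcongr; exact add_one_le_exp _

section Words

variable {α : Type*} [Fintype α]

theorem Fintype.sum_fin_succ_pi {M : Type*} [AddCommMonoid M] {n : ℕ}
    (f : (Fin (n + 1) → α) → M) :
    ∑ w, f w = ∑ a, ∑ w : Fin n → α, f (Fin.cons a w) := by
  rw [← (Fin.consEquiv fun _ => α).sum_comp, Fintype.sum_prod_type]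
  rfl

variable [DecidableEq α]

theorem List.sum_ite_cons_sublist_cons (a : α) (l₁ l₂ : List α) :
    (∑ c : α, if (a :: l₁).Sublist (c :: l₂) then 1 else 0) =
      (if l₁.Sublist l₂ then 1 else 0) +
        (Fintype.card α - 1) * if (a :: l₁).Sublist l₂ then 1 else 0 := by
  have hne : ∀ c ∈ ({a}ᶜ : Finset α),
      (if (a :: l₁).Sublist (c :: l₂) then 1 else 0) = if (a :: l₁).Sublist l₂ then 1 else 0 := by
    intro c hc
    have hac : a ≠ c := fun h => by simp [h] at hc
    simp [List.cons_sublist_cons', hac]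
  rw [Fintype.sum_eq_add_sum_compl a, sum_congr rfl hne, sum_const, card_compl, card_singleton,
    smul_eq_mul, mul_comm]
  simp only [List.cons_sublist_cons]

variable (α) in
def sublistCount (m b : ℕ) : ℕ :=
  ∑ A : Fin m → α, ∑ B : Fin b → α, if (List.ofFn A).Sublist (List.ofFn B) then 1 else 0

theorem sublistCount_zero_left (b : ℕ) : sublistCount α 0 b = Fintype.card α ^ b := by
  simp [sublistCount]

theorem sublistCount_succ_zero (m : ℕ) : sublistCount α (m + 1) 0 = 0 := by
  simp [sublistCount]

theorem sublistCount_succ_succ (m b : ℕ) :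
    sublistCount α (m + 1) (b + 1) =
      Fintype.card α * sublistCount α m b + (Fintype.card α - 1) * sublistCount α (m + 1) b := by
  have sum_cons_right (a : α) (A : Fin m → α) :
      (∑ B : Fin (b + 1) → α, if (List.ofFn (Fin.cons a A)).Sublist (List.ofFn B) then 1 else 0) =
        (∑ B : Fin b → α, if (List.ofFn A).Sublist (List.ofFn B) then 1 else 0) +
          (Fintype.card α - 1) *
            ∑ B : Fin b → α, if (List.ofFn (Fin.cons a A)).Sublist (List.ofFn B) then 1 else 0 := by
    rw [Fintype.sum_fin_succ_pi, sum_comm, mul_sum, ← sum_add_distrib]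
    refine sum_congr rfl fun B _ => ?_
    simpa only [List.ofFn_cons] using List.sum_ite_cons_sublist_cons a (List.ofFn A) (List.ofFn B)
  simp only [sublistCount, Fintype.sum_fin_succ_pi (fun A : Fin (m + 1) → α => ∑ B, _),
    sum_cons_right, sum_add_distrib, sum_const, card_univ, smul_eq_mul, mul_sum]

theorem unifPr_sublist_eq (m b : ℕ) :
    unifPr (fun p : (Fin m → α) × (Fin b → α) => (List.ofFn p.1).Sublist (List.ofFn p.2)) =
      sublistCount α m b / (Fintype.card α : ℝ) ^ (m + b) := by
  unfold unifPr sublistCount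
  rw [card_filter, Fintype.sum_prod_type]
  simp [pow_add]

variable [Nonempty α]

theorem sublistCount_le (m b : ℕ) :
    (sublistCount α m b : ℝ) ≤
      (Fintype.card α : ℝ) ^ (m + b) * exp (b / (4 * Fintype.card α) - 7 * m / 32) := by
  set k := Fintype.card α with hk_def
  have hk : 1 ≤ k := Fintype.card_pos
  induction b generalizing m with
  | zero =>
    cases m with
    | zero => simp [sublistCount_zero_left]
    | succ m => rw [sublistCount_succ_zero, Nat.cast_zero]; positivity
  | succ b ih =>
    cases m with
    | zero =>
      rw [sublistCount_zero_left, ← hk_def]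
      simpa using le_mul_of_one_le_right (by positivity) (one_le_exp (by positivity))
    | succ m =>
      set E := exp (b / (4 * k) - 7 * (m + 1 : ℕ) / 32)
      have hE_left : exp (b / (4 * k) - 7 * m / 32) = exp (7 / 32) * E := by
        rw [← exp_add]; push_cast; ring_nf
      have hE_right : exp ((b + 1 : ℕ) / (4 * k) - 7 * (m + 1 : ℕ) / 32) =
          exp (1 / (4 * k)) * E := by
        rw [← exp_add]; push_cast; ring_nf
      calc (sublistCount α (m + 1) (b + 1) : ℝ)
          = k * sublistCount α m b + (k - 1) * sublistCount α (m + 1) b := by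
            rw [sublistCount_succ_succ, ← hk_def]; push_cast [Nat.cast_sub hk]; ring
        _ ≤ k * (k ^ (m + b) * exp (b / (4 * k) - 7 * m / 32)) +
              (k - 1) * (k ^ (m + 1 + b) * E) := by
            have : (0 : ℝ) ≤ k - 1 := sub_nonneg.mpr (mod_cast hk)
            gcongr
            exacts [ih m, ih (m + 1)]
        _ = k ^ (m + b + 1) * E * (exp (7 / 32) + (k - 1)) := by
            rw [hE_left]; ring
        _ ≤ k ^ (m + b + 1) * E * (k * exp (1 / (4 * k))) := by
            gcongr
            exact exp_seven_div_thirtytwo_add_sub_one_le (by positivity)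
        _ = k ^ (m + 1 + (b + 1)) * exp ((b + 1 : ℕ) / (4 * k) - 7 * (m + 1 : ℕ) / 32) := by
            rw [hE_right]; ring

end Words

/-- If `A` is a uniformly random word of length `m` over an alphabet of size `k` and
`B` is an independent uniformly random word of length `b` over the same alphabet, then
`Pr[A is a subsequence of B] ≤ exp((b - (7/8)·k·m)/(4k))`. -/
theorem prob_sublist_le (k m b : ℕ) (hk : 1 ≤ k) :
    unifPr (fun p : (Fin m → Fin k) × (Fin b → Fin k) =>
        (List.ofFn p.1).Sublist (List.ofFn p.2)) ≤
      Real.exp (((b : ℝ) - 7 / 8 * k * m) / (4 * k)) := by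
  have : NeZero k := ⟨by omega⟩
  have hk0 : (0 : ℝ) < k := by exact_mod_cast hk
  have hexp : ((b : ℝ) - 7 / 8 * k * m) / (4 * k) = b / (4 * k) - 7 * m / 32 := by
    field_simp; ring
  rw [unifPr_sublist_eq, hexp, div_le_iff₀ (by positivity), mul_comm]
  simpa using sublistCount_le (α := Fin k) m b
end

section
/- Let Z be uniform on [k]^{n+s}, V = Z[0,n), W = Z[s,n+s). Suppose V is partitioned into consecutive blocks (V_i) and W into consecutive blocks (W_i) such that for each i the sets of positions of Z occupied by V_i and W_i are disjoint. Let X = Σ_i LCS(V_i, W_i). Then E[X] ≤ E[L_n], where L_n is the LCS length of two independent uniform words of length n over [k]. -/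
/-!
The blocks `V_i` and `W_i` read disjoint sets of coordinates of `Z`, so the pair `(V_i, W_i)` is
uniformly distributed, exactly like the pair of `i`-th blocks of two independent uniform words
`P, Q` of length `n`. Hence `E[X]` equals the expectation of `Σ_i LCS(P_i, Q_i)`, and pointwise
this sum is at most `LCS(P, Q)`, because concatenating common subsequences of the blocks gives a
common subsequence of `P` and `Q`.
-/

noncomputable def lcs {α : Type*} (V W : List α) : ℕ :=
  sSup {L | ∃ C : List α, C.Sublist V ∧ C.Sublist W ∧ C.length = L}

/-- `aseq k n = E[L_n]`, the expected LCS length of two independent uniform words. -/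
noncomputable def aseq (k n : ℕ) : ℝ :=
  (∑ p : (Fin n → Fin k) × (Fin n → Fin k), (lcs (List.ofFn p.1) (List.ofFn p.2) : ℝ)) /
    (Fintype.card ((Fin n → Fin k) × (Fin n → Fin k)) : ℝ)

open Finset BigOperators Function

section LCS

variable {α : Type*}

theorem bddAbove_commonSublist_lengths (V W : List α) :
    BddAbove {L | ∃ C : List α, C.Sublist V ∧ C.Sublist W ∧ C.length = L} :=
  ⟨V.length, by rintro L ⟨C, hV, -, rfl⟩; exact hV.length_le⟩

theorem exists_sublist_length_eq_lcs (V W : List α) :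
    ∃ C : List α, C.Sublist V ∧ C.Sublist W ∧ C.length = lcs V W :=
  Nat.sSup_mem (s := {L | ∃ C : List α, C.Sublist V ∧ C.Sublist W ∧ C.length = L})
    ⟨0, [], List.nil_sublist _, List.nil_sublist _, rfl⟩ (bddAbove_commonSublist_lengths V W)

theorem List.Sublist.length_le_lcs {C V W : List α} (hV : C.Sublist V) (hW : C.Sublist W) :
    C.length ≤ lcs V W :=
  le_csSup (bddAbove_commonSublist_lengths V W) ⟨C, hV, hW, rfl⟩

theorem lcs_mono {V V' W W' : List α} (hV : V.Sublist V') (hW : W.Sublist W') :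
    lcs V W ≤ lcs V' W' := by
  obtain ⟨C, hCV, hCW, hC⟩ := exists_sublist_length_eq_lcs V W
  exact hC ▸ (hCV.trans hV).length_le_lcs (hCW.trans hW)

theorem lcs_add_lcs_le_lcs_append (V₁ V₂ W₁ W₂ : List α) :
    lcs V₁ W₁ + lcs V₂ W₂ ≤ lcs (V₁ ++ V₂) (W₁ ++ W₂) := by
  obtain ⟨C₁, hC₁V, hC₁W, hC₁⟩ := exists_sublist_length_eq_lcs V₁ W₁
  obtain ⟨C₂, hC₂V, hC₂W, hC₂⟩ := exists_sublist_length_eq_lcs V₂ W₂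
  simpa [hC₁, hC₂] using (hC₁V.append hC₂V).length_le_lcs (hC₁W.append hC₂W)

theorem List.take_eq_take_append_segment (l : List α) {m n : ℕ} (h : m ≤ n) :
    l.take n = l.take m ++ (l.drop m).take (n - m) := by
  rw [← List.take_add, Nat.add_sub_cancel' h]

theorem sum_lcs_segments_le_lcs_take (V W : List α) :
    ∀ {r : ℕ} (a c : Fin (r + 1) → ℕ), Monotone a → Monotone c →
      ∑ i : Fin r, lcs ((V.drop (a i.castSucc)).take (a i.succ - a i.castSucc))
          ((W.drop (c i.castSucc)).take (c i.succ - c i.castSucc))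
        ≤ lcs (V.take (a (Fin.last r))) (W.take (c (Fin.last r)))
  | 0, _, _, _, _ => by simp
  | r + 1, a, c, ha, hc => by
    have ih := sum_lcs_segments_le_lcs_take V W (a ∘ Fin.castSucc) (c ∘ Fin.castSucc)
      (ha.comp Fin.strictMono_castSucc.monotone) (hc.comp Fin.strictMono_castSucc.monotone)
    simp only [comp_apply, ← Fin.succ_castSucc] at ih
    rw [Fin.sum_univ_castSucc, ← Fin.succ_last,
      List.take_eq_take_append_segment V (ha (Fin.castSucc_le_succ _)),
      List.take_eq_take_append_segment W (hc (Fin.castSucc_le_succ _))]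
    exact (Nat.add_le_add_right ih _).trans (lcs_add_lcs_le_lcs_append _ _ _ _)

theorem sum_lcs_segments_le_lcs (V W : List α) {r : ℕ} {a c : Fin (r + 1) → ℕ}
    (ha : Monotone a) (hc : Monotone c) :
    ∑ i : Fin r, lcs ((V.drop (a i.castSucc)).take (a i.succ - a i.castSucc))
        ((W.drop (c i.castSucc)).take (c i.succ - c i.castSucc)) ≤ lcs V W :=
  (sum_lcs_segments_le_lcs_take V W a c ha hc).trans
    (lcs_mono (List.take_sublist _ _) (List.take_sublist _ _))

end LCS

theorem expect_comp_of_injective {α β γ M : Type*} [Fintype α] [Fintype β] [Fintype γ]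
    [DecidableEq α] [DecidableEq β] [Nonempty γ] [AddCommMonoid M] [Module ℚ≥0 M]
    {g : α → β} (hg : Injective g) (F : (α → γ) → M) :
    𝔼 Z : β → γ, F (Z ∘ g) = 𝔼 w : α → γ, F w := by
  classical
  let e : (β → γ) ≃ (α → γ) × (((Set.range g)ᶜ : Set β) → γ) :=
    ((Equiv.arrowCongr (Equiv.Set.sumCompl (Set.range g)).symm (.refl γ)).trans
      (Equiv.sumArrowEquivProdArrow _ _ γ)).trans
      (Equiv.prodCongr (Equiv.arrowCongr (Equiv.ofInjective g hg).symm (.refl γ)) (.refl _))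
  calc 𝔼 Z : β → γ, F (Z ∘ g) = 𝔼 p : (α → γ) × (((Set.range g)ᶜ : Set β) → γ), F p.1 :=
        Fintype.expect_equiv e _ _ fun Z => rfl
    _ = 𝔼 w : α → γ, F w := by
        rw [← univ_product_univ, expect_product' univ univ fun w _ => F w]
        simp

theorem List.take_drop_ofFn {α : Type*} {N : ℕ} (f : Fin N → α) {d t : ℕ} (h : d + t ≤ N) :
    ((List.ofFn f).drop d).take t = List.ofFn (f ∘ Fin.castLE h ∘ Fin.natAdd d) := by
  apply List.ext_getElem <;> simp; omega

theorem injective_castLE_comp_natAdd {N d t : ℕ} (h : d + t ≤ N) :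
    Injective (Fin.castLE h ∘ Fin.natAdd d : Fin t → Fin N) :=
  (Fin.castLE_injective h).comp (Fin.natAdd_injective t d)

theorem expect_lcs_ofFn_comp (k : ℕ) [NeZero k] {ι : Type*} [Fintype ι] [DecidableEq ι]
    {p q : ℕ} {f : Fin p → ι} {g : Fin q → ι} (hf : Injective f) (hg : Injective g)
    (hfg : ∀ i j, f i ≠ g j) :
    𝔼 Z : ι → Fin k, (lcs (List.ofFn (Z ∘ f)) (List.ofFn (Z ∘ g)) : ℝ) =
      𝔼 u : Fin p ⊕ Fin q → Fin k, (lcs (List.ofFn (u ∘ Sum.inl)) (List.ofFn (u ∘ Sum.inr)) : ℝ) :=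
  expect_comp_of_injective (hf.sumElim hg hfg)
    fun u => (lcs (List.ofFn (u ∘ Sum.inl)) (List.ofFn (u ∘ Sum.inr)) : ℝ)

theorem expect_lcs_segments_eq (k : ℕ) [NeZero k] {n s A p C q : ℕ}
    (hA : A + p ≤ n) (hC : C + q ≤ n) (hdisj : A + p ≤ s + C ∨ s + C + q ≤ A) :
    𝔼 Z : Fin (n + s) → Fin k,
        (lcs ((((List.ofFn Z).take n).drop A).take p) ((((List.ofFn Z).drop s).drop C).take q) : ℝ) =
      𝔼 w : Fin n ⊕ Fin n → Fin k,
        (lcs (((List.ofFn (w ∘ Sum.inl)).drop A).take p)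
          (((List.ofFn (w ∘ Sum.inr)).drop C).take q) : ℝ) := by
  have hV (Z : Fin (n + s) → Fin k) : (((List.ofFn Z).take n).drop A).take p =
      List.ofFn (Z ∘ Fin.castLE (by omega : A + p ≤ n + s) ∘ Fin.natAdd A) := by
    rw [List.drop_take, List.take_take, min_eq_left (by omega)]
    exact List.take_drop_ofFn _ _
  have hW (Z : Fin (n + s) → Fin k) : (((List.ofFn Z).drop s).drop C).take q =
      List.ofFn (Z ∘ Fin.castLE (by omega : s + C + q ≤ n + s) ∘ Fin.natAdd (s + C)) := by
    rw [List.drop_drop]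
    exact List.take_drop_ofFn _ _
  simp only [hV, hW, List.take_drop_ofFn _ hA, List.take_drop_ofFn _ hC]
  rw [expect_lcs_ofFn_comp k (injective_castLE_comp_natAdd _) (injective_castLE_comp_natAdd _)
      fun i j h => by simp [Fin.ext_iff] at h; omega]
  exact (expect_lcs_ofFn_comp k (Sum.inl_injective.comp (injective_castLE_comp_natAdd hA))
    (Sum.inr_injective.comp (injective_castLE_comp_natAdd hC)) fun _ _ => Sum.inl_ne_inr).symm

theorem aseq_eq_expect (k n : ℕ) :
    aseq k n = 𝔼 w : Fin n ⊕ Fin n → Fin k,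
      (lcs (List.ofFn (w ∘ Sum.inl)) (List.ofFn (w ∘ Sum.inr)) : ℝ) := by
  rw [aseq, ← Fintype.expect_eq_sum_div_card]
  exact Fintype.expect_equiv (Equiv.sumArrowEquivProdArrow _ _ _).symm _ _ fun _ => rfl

theorem expected_block_lcs_le_general (k n s r : ℕ) (hk : 1 ≤ k)
    (a c : Fin (r + 1) → ℕ) (ha : Monotone a) (hc : Monotone c)
    (han : a (Fin.last r) = n) (hcn : c (Fin.last r) = n)
    (hdisj : ∀ i : Fin r, a i.succ ≤ s + c i.castSucc ∨ s + c i.succ ≤ a i.castSucc) :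
    (∑ Z : Fin (n + s) → Fin k, (∑ i : Fin r,
        (lcs
          ((((List.ofFn Z).take n).drop (a i.castSucc)).take (a i.succ - a i.castSucc))
          ((((List.ofFn Z).drop s).drop (c i.castSucc)).take (c i.succ - c i.castSucc))
          : ℝ))) / (Fintype.card (Fin (n + s) → Fin k) : ℝ) ≤ aseq k n := by
  have : NeZero k := ⟨by omega⟩
  have hsegment (i : Fin r) : a i.castSucc ≤ a i.succ ∧ a i.succ ≤ n ∧
      c i.castSucc ≤ c i.succ ∧ c i.succ ≤ n :=
    ⟨ha (Fin.castSucc_le_succ i), han ▸ ha (Fin.le_last _),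
      hc (Fin.castSucc_le_succ i), hcn ▸ hc (Fin.le_last _)⟩
  rw [← Fintype.expect_eq_sum_div_card, expect_sum_comm, aseq_eq_expect,
    sum_congr rfl fun i _ => expect_lcs_segments_eq k (by grind) (by grind) (by grind),
    ← expect_sum_comm]
  exact expect_le_expect fun w _ => mod_cast sum_lcs_segments_le_lcs _ _ ha hc

/-- Let `Z` be uniform on `[k]^{n+s}`, `V = Z[0,n)`, `W = Z[s,n+s)`.  Suppose `V` and `W`
are partitioned into `r` consecutive blocks by boundary sequences `a` and `c`
(so `V_i = V[a_i, a_{i+1})` and `W_i = W[c_i, c_{i+1})`) such that for each `i` the sets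
of positions of `Z` occupied by `V_i` and by `W_i` are disjoint.  Then with
`X = Σ_i LCS(V_i, W_i)` we have `E[X] ≤ E[L_n]`. -/
theorem expected_block_lcs_le (k n s r : ℕ) (hk : 1 ≤ k) (hs : s ≤ n)
    (a c : Fin (r + 1) → ℕ) (ha : Monotone a) (hc : Monotone c)
    (ha0 : a 0 = 0) (han : a (Fin.last r) = n) (hc0 : c 0 = 0) (hcn : c (Fin.last r) = n)
    (hdisj : ∀ i : Fin r, a i.succ ≤ s + c i.castSucc ∨ s + c i.succ ≤ a i.castSucc) :
    (∑ Z : Fin (n + s) → Fin k, (∑ i : Fin r,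
        (lcs
          ((((List.ofFn Z).take n).drop (a i.castSucc)).take (a i.succ - a i.castSucc))
          ((((List.ofFn Z).drop s).drop (c i.castSucc)).take (c i.succ - c i.castSucc))
          : ℝ))) / (Fintype.card (Fin (n + s) → Fin k) : ℝ) ≤ aseq k n :=
  expected_block_lcs_le_general k n s r hk a c ha hc han hcn hdisj
end
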